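/- Let N ∼ 𝒩(0,1) and let h : ℝ → ℝ be twice continuously differentiable with ‖h''‖_∞ ≤ 1. Let f_h be the Stein solution associated with h. Then E[f_h'''(N)] = −(1/4) E[h(N) H₄(N)], where H₄(x) = x⁴ − 6x² + 3 is the fourth Hermite polynomial. -/

import Mathlib

/-!
Gaussian integration by parts, `E[u'(N)] = E[N u(N)]`, iterates to `E[u⁽ⁿ⁾(N)] = E[Hₙ(N) u(N)]`
for the Hermite polynomials `Hₙ₊₁ = X Hₙ - Hₙ'`; hence `E[f'''(N)] = E[H₃(N) f(N)]` for the Stein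
solution `f`. One more integration by parts against `H₄`, with the Stein equation
`f' - x f = h - E[h(N)]`, gives `E[H₄(N) (h(N) - E[h(N)])] = -E[H₄'(N) f(N)] = -4 E[H₃(N) f(N)]`,
and `E[H₄(N)] = 0`. No boundary terms appear because `h`, `f` and their derivatives grow strictly
slower than `exp (x² / 2)`; for `f` this comes from the vanishing mean of `(h - E[h(N)]) e^{-y²/2}`:
its integral over `(-∞, x]` is also minus its integral over `(x, ∞)`, so it decays like a Gaussian.
-/

open MeasureTheory ProbabilityTheory

/-- The expectation `E[h(N)]` of `h` under the standard Gaussian law. -/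
noncomputable def gaussMean (h : ℝ → ℝ) : ℝ := ∫ z, h z ∂(gaussianReal 0 1)

/-- The Stein solution `f_h` associated with `h`. -/
noncomputable def steinSol (h : ℝ → ℝ) (x : ℝ) : ℝ :=
  Real.exp (x ^ 2 / 2) * ∫ y in Set.Iic x, (h y - gaussMean h) * Real.exp (-y ^ 2 / 2)

open Real Set Polynomial

lemma exists_abs_mul_exp_le {a : ℝ} (ha : a < 1 / 2) :
    ∃ b K, a ≤ b ∧ b < 1 / 2 ∧ ∀ x, |x| * exp (a * x ^ 2) ≤ K * exp (b * x ^ 2) := by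
  obtain ⟨ε, hε₀, hε₁, hεa⟩ : ∃ ε : ℝ, 0 < ε ∧ ε ≤ 1 ∧ a + ε < 1 / 2 :=
    ⟨min 1 ((1 / 2 - a) / 2), by positivity, min_le_left _ _,
      by linarith [min_le_right 1 ((1 / 2 - a) / 2)]⟩
  refine ⟨a + ε, ε⁻¹, by linarith, hεa, fun x => ?_⟩
  have hx : |x| ≤ ε⁻¹ * exp (ε * x ^ 2) := by
    rw [le_inv_mul_iff₀ hε₀]
    nlinarith [add_one_le_exp (ε * x ^ 2), sq_abs x, sq_nonneg (|x| - 1), abs_nonneg x]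
  calc |x| * exp (a * x ^ 2) ≤ ε⁻¹ * exp (ε * x ^ 2) * exp (a * x ^ 2) := by gcongr
    _ = ε⁻¹ * exp ((a + ε) * x ^ 2) := by rw [add_mul, exp_add]; ring

/-- Growth strictly below `exp (x ^ 2 / 2)`, unlike a fixed exponent, survives multiplication by
polynomials and taking antiderivatives. -/
def GaussianTame (u : ℝ → ℝ) : Prop :=
  Continuous u ∧ ∃ a C : ℝ, 0 ≤ a ∧ a < 1 / 2 ∧ ∀ x, |u x| ≤ C * exp (a * x ^ 2)

namespace GaussianTame

variable {u v : ℝ → ℝ}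

lemma of_abs_le {C : ℝ} (hu : Continuous u) (h : ∀ x, |u x| ≤ C) : GaussianTame u :=
  ⟨hu, 0, C, le_rfl, by norm_num, by simpa using h⟩

lemma const (c : ℝ) : GaussianTame fun _ => c :=
  of_abs_le continuous_const fun _ => le_rfl

lemma add (hu : GaussianTame u) (hv : GaussianTame v) : GaussianTame fun x => u x + v x := by
  obtain ⟨hu, a, C, ha₀, ha, hC⟩ := hu
  obtain ⟨hv, b, D, hb₀, hb, hD⟩ := hv
  refine ⟨hu.add hv, max a b, C + D, le_max_of_le_left ha₀, max_lt ha hb, fun x => ?_⟩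
  have hC₀ : 0 ≤ C := by simpa using (abs_nonneg _).trans (hC 0)
  have hD₀ : 0 ≤ D := by simpa using (abs_nonneg _).trans (hD 0)
  calc |u x + v x| ≤ C * exp (a * x ^ 2) + D * exp (b * x ^ 2) :=
        (abs_add_le _ _).trans (add_le_add (hC x) (hD x))
    _ ≤ C * exp (max a b * x ^ 2) + D * exp (max a b * x ^ 2) := by gcongr <;> simp
    _ = (C + D) * exp (max a b * x ^ 2) := by ring

lemma const_mul (c : ℝ) (hu : GaussianTame u) : GaussianTame fun x => c * u x := by
  obtain ⟨hu, a, C, ha₀, ha, hC⟩ := hu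
  refine ⟨continuous_const.mul hu, a, |c| * C, ha₀, ha, fun x => ?_⟩
  rw [abs_mul, mul_assoc]
  exact mul_le_mul_of_nonneg_left (hC x) (abs_nonneg c)

lemma sub (hu : GaussianTame u) (hv : GaussianTame v) : GaussianTame fun x => u x - v x := by
  simpa [sub_eq_add_neg] using hu.add (hv.const_mul (-1))

lemma id_mul (hu : GaussianTame u) : GaussianTame fun x => x * u x := by
  obtain ⟨hu, a, C, ha₀, ha, hC⟩ := hu
  obtain ⟨b, K, hab, hb, hK⟩ := exists_abs_mul_exp_le ha
  have hC₀ : 0 ≤ C := by simpa using (abs_nonneg _).trans (hC 0)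
  refine ⟨continuous_id.mul hu, b, C * K, ha₀.trans hab, hb, fun x => ?_⟩
  calc |x * u x| ≤ C * (|x| * exp (a * x ^ 2)) := by
        rw [abs_mul, mul_left_comm]; exact mul_le_mul_of_nonneg_left (hC x) (abs_nonneg x)
    _ ≤ C * (K * exp (b * x ^ 2)) := mul_le_mul_of_nonneg_left (hK x) hC₀
    _ = C * K * exp (b * x ^ 2) := by ring

lemma id_pow_mul (n : ℕ) (hu : GaussianTame u) : GaussianTame fun x => x ^ n * u x := by
  induction n with
  | zero => simpa using hu
  | succ n ih => simpa [pow_succ, mul_assoc, mul_left_comm] using ih.id_mul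

lemma eval_mul (p : ℝ[X]) (hu : GaussianTame u) : GaussianTame fun x => p.eval x * u x := by
  induction p using Polynomial.induction_on' with
  | add p q hp hq => simpa [add_mul] using hp.add hq
  | monomial n c => simpa [mul_assoc] using (hu.id_pow_mul n).const_mul c

lemma of_hasDerivAt {u' : ℝ → ℝ} (hu : ∀ x, HasDerivAt u (u' x) x) (hu' : GaussianTame u') :
    GaussianTame u := by
  obtain ⟨-, a, C, ha₀, ha, hC⟩ := hu'
  obtain ⟨b, K, hab, hb, hK⟩ := exists_abs_mul_exp_le ha
  have hC₀ : 0 ≤ C := by simpa using (abs_nonneg _).trans (hC 0)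
  refine ⟨continuous_iff_continuousAt.2 fun x => (hu x).continuousAt, b, |u 0| + C * K,
    ha₀.trans hab, hb, fun x => ?_⟩
  have hmvt : |u x - u 0| ≤ C * exp (a * x ^ 2) * |x| := by
    have hx : x ∈ Icc (-|x|) |x| := ⟨neg_abs_le x, le_abs_self x⟩
    have := (convex_Icc (-|x|) |x|).norm_image_sub_le_of_norm_hasDerivWithin_le
      (C := C * exp (a * x ^ 2))
      (fun y _ => (hu y).hasDerivWithinAt) (fun y hy => ?_) (by simp : (0 : ℝ) ∈ Icc (-|x|) |x|) hx
    · simpa using this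
    · refine (hC y).trans (mul_le_mul_of_nonneg_left ?_ hC₀)
      have hyx : y ^ 2 ≤ x ^ 2 := by simpa using sq_le_sq' hy.1 hy.2
      exact exp_le_exp.2 (mul_le_mul_of_nonneg_left hyx ha₀)
  calc |u x| ≤ |u 0| + C * (|x| * exp (a * x ^ 2)) := by
        linarith [abs_sub_abs_le_abs_sub (u x) (u 0)]
    _ ≤ |u 0| * exp (b * x ^ 2) + C * (K * exp (b * x ^ 2)) := by
        gcongr ?_ + ?_
        · exact le_mul_of_one_le_right (abs_nonneg _) (one_le_exp (by nlinarith [sq_nonneg x]))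
        · exact mul_le_mul_of_nonneg_left (hK x) hC₀
    _ = (|u 0| + C * K) * exp (b * x ^ 2) := by ring

lemma integrable_mul_gaussianPDFReal (hu : GaussianTame u) :
    Integrable fun x => gaussianPDFReal 0 1 x * u x := by
  obtain ⟨hu, a, C, -, ha, hC⟩ := hu
  refine ((integrable_exp_neg_mul_sq (b := 1 / 2 - a) (by linarith)).const_mul
    ((√(2 * π))⁻¹ * C)).mono' (by fun_prop) (ae_of_all _ fun x => ?_)
  have hexp : exp (-(1 / 2 - a) * x ^ 2) = exp (-x ^ 2 / 2) * exp (a * x ^ 2) := by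
    rw [← exp_add]; ring_nf
  rw [norm_mul, Real.norm_of_nonneg (gaussianPDFReal_nonneg 0 1 x), norm_eq_abs, hexp,
    gaussianPDFReal]
  simp only [NNReal.coe_one, mul_one, sub_zero]
  calc (√(2 * π))⁻¹ * exp (-x ^ 2 / 2) * |u x|
      ≤ (√(2 * π))⁻¹ * exp (-x ^ 2 / 2) * (C * exp (a * x ^ 2)) := by gcongr; exact hC x
    _ = _ := by ring

lemma integrable (hu : GaussianTame u) : Integrable u (gaussianReal 0 1) := by
  rw [gaussianReal_of_var_ne_zero 0 one_ne_zero, integrable_withDensity_iff_integrable_smul'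
    (measurable_gaussianPDF 0 1) (ae_of_all _ fun _ => ENNReal.ofReal_lt_top)]
  simpa [gaussianPDF, gaussianPDFReal_nonneg] using hu.integrable_mul_gaussianPDFReal

end GaussianTame

lemma hasDerivAt_gaussianPDFReal (μ : ℝ) (v : NNReal) (x : ℝ) :
    HasDerivAt (gaussianPDFReal μ v) (-(x - μ) / v * gaussianPDFReal μ v x) x := by
  have hq : HasDerivAt (fun y => -(y - μ) ^ 2 / (2 * v)) (-(x - μ) / v) x :=
    ((((hasDerivAt_id' x).sub_const μ).fun_pow 2).neg.div_const (2 * (v : ℝ))).congr_deriv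
      (by push_cast; ring)
  rw [gaussianPDFReal_def]
  exact (hq.exp.const_mul _).congr_deriv (by ring)

theorem integral_deriv_gaussianReal_eq_integral_id_mul {u u' : ℝ → ℝ}
    (hu : ∀ x, HasDerivAt u (u' x) x) (htu : GaussianTame u) (htu' : GaussianTame u') :
    ∫ x, u' x ∂gaussianReal 0 1 = ∫ x, x * u x ∂gaussianReal 0 1 := by
  simp only [integral_gaussianReal_eq_integral_smul one_ne_zero, smul_eq_mul]
  have hibp := integral_mul_deriv_eq_deriv_mul_of_integrable (u := u) (u' := u')
    (v := gaussianPDFReal 0 1) (v' := fun x => -(x - 0) / (1 : NNReal) * gaussianPDFReal 0 1 x)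
    (fun x _ => hu x) (fun x _ => hasDerivAt_gaussianPDFReal 0 1 x)
    (by simpa [Pi.mul_def, mul_comm, mul_assoc, mul_left_comm] using
      htu.id_mul.integrable_mul_gaussianPDFReal.neg)
    (by simpa [Pi.mul_def, mul_comm] using htu'.integrable_mul_gaussianPDFReal)
    (by simpa [Pi.mul_def, mul_comm] using htu.integrable_mul_gaussianPDFReal)
  simp only [NNReal.coe_one, div_one, sub_zero, neg_mul, mul_neg, integral_neg, neg_inj] at hibp
  simp only [mul_comm (gaussianPDFReal 0 1 _), ← hibp]
  congr 1; ext x; ring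

theorem integral_eval_mul_deriv_gaussianReal (p : ℝ[X]) {u u' : ℝ → ℝ}
    (hu : ∀ x, HasDerivAt u (u' x) x) (htu : GaussianTame u) (htu' : GaussianTame u') :
    ∫ x, p.eval x * u' x ∂gaussianReal 0 1 =
      ∫ x, (X * p - derivative p).eval x * u x ∂gaussianReal 0 1 := by
  have hp'u := (htu.eval_mul (derivative p)).integrable
  have key := integral_deriv_gaussianReal_eq_integral_id_mul
    (fun x => (p.hasDerivAt x).mul (hu x)) (htu.eval_mul p) ((htu.eval_mul _).add (htu'.eval_mul p))
  rw [integral_add hp'u (htu'.eval_mul p).integrable] at key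
  simp only [Pi.mul_apply] at key
  simp only [eval_sub, eval_mul, eval_X, sub_mul]
  rw [integral_sub ((htu.eval_mul p).id_mul.integrable.congr (ae_of_all _ fun x => by ring)) hp'u]
  simp only [mul_assoc]
  linarith

lemma map_hermite_succ (n : ℕ) :
    (hermite (n + 1)).map (algebraMap ℤ ℝ) =
      X * (hermite n).map (algebraMap ℤ ℝ) - derivative ((hermite n).map (algebraMap ℤ ℝ)) := by
  simp [hermite_succ, derivative_map]

theorem integral_iteratedDeriv_gaussianReal_eq_integral_hermite_mul (n : ℕ) {u : ℝ → ℝ}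
    (hd : ∀ k < n, Differentiable ℝ (iteratedDeriv k u))
    (ht : ∀ k ≤ n, GaussianTame (iteratedDeriv k u)) :
    ∫ x, iteratedDeriv n u x ∂gaussianReal 0 1 =
      ∫ x, aeval x (hermite n) * u x ∂gaussianReal 0 1 := by
  induction n generalizing u with
  | zero => simp
  | succ n ih =>
    rw [iteratedDeriv_succ',
      ih (fun k hk => by simpa [iteratedDeriv_succ'] using hd (k + 1) (by omega))
        (fun k hk => by simpa [iteratedDeriv_succ'] using ht (k + 1) (by omega))]
    have hu : Differentiable ℝ u := by simpa using hd 0 (by omega)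
    simp only [← eval_map_algebraMap]
    rw [integral_eval_mul_deriv_gaussianReal _ (fun x => (hu x).hasDerivAt)
      (by simpa using ht 0 (by omega)) (by simpa using ht 1 (by omega)), map_hermite_succ]

theorem integral_aeval_hermite_gaussianReal_eq_zero {n : ℕ} (hn : n ≠ 0) :
    ∫ x, aeval x (hermite n) ∂gaussianReal 0 1 = 0 := by
  obtain ⟨n, rfl⟩ := Nat.exists_eq_succ_of_ne_zero hn
  simpa [← eval_map_algebraMap, map_hermite_succ] using
    (integral_eval_mul_deriv_gaussianReal ((hermite n).map (algebraMap ℤ ℝ))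
      (fun x => hasDerivAt_const x (1 : ℝ)) (GaussianTame.const 1) (GaussianTame.const 0)).symm

theorem integral_aeval_hermite_mul_sub_const {n : ℕ} (hn : n ≠ 0) {u : ℝ → ℝ}
    (hu : GaussianTame u) (c : ℝ) :
    ∫ x, aeval x (hermite n) * (u x - c) ∂gaussianReal 0 1 =
      ∫ x, aeval x (hermite n) * u x ∂gaussianReal 0 1 := by
  have hint (v : ℝ → ℝ) (hv : GaussianTame v) :
      Integrable (fun x => aeval x (hermite n) * v x) (gaussianReal 0 1) := by
    simpa only [eval_map_algebraMap] using
      (hv.eval_mul ((hermite n).map (algebraMap ℤ ℝ))).integrable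
  simp only [mul_sub]
  rw [integral_sub (hint u hu) (hint _ (.const c)), integral_mul_const,
    integral_aeval_hermite_gaussianReal_eq_zero hn, zero_mul, sub_zero]

lemma hermite_three : hermite 3 = X ^ 3 - 3 * X := by
  simp only [hermite_succ, hermite_zero, eq_intCast, Int.cast_one, mul_one, derivative_one,
    sub_zero, derivative_X, derivative_sub, derivative_mul, one_mul]
  ring

lemma hermite_four : hermite 4 = X ^ 4 - 6 * X ^ 2 + 3 := by
  simp only [hermite_succ, hermite_zero, eq_intCast, Int.cast_one, mul_one, derivative_one,
    sub_zero, derivative_X, derivative_sub, derivative_mul, one_mul, derivative_add]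
  ring

lemma derivative_hermite_four : derivative (hermite 4) = 4 * hermite 3 := by
  rw [hermite_four, hermite_three]
  simp only [derivative_add, derivative_sub, derivative_X_pow_succ, Nat.cast_ofNat, Int.reduceAdd,
    eq_intCast, Int.cast_ofNat, derivative_mul, derivative_ofNat, zero_mul, Nat.cast_one, pow_one,
    zero_add, add_zero]
  ring

lemma aeval_hermite_four (x : ℝ) : aeval x (hermite 4) = x ^ 4 - 6 * x ^ 2 + 3 := by
  simp only [hermite_four, map_add, map_sub, map_pow, map_mul, aeval_X, map_ofNat]

theorem integral_eval_mul_eq_neg_integral_derivative_mul (p : ℝ[X]) {f g : ℝ → ℝ}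
    (hf : ∀ x, HasDerivAt f (x * f x + g x) x) (htf : GaussianTame f) (htg : GaussianTame g) :
    ∫ x, p.eval x * g x ∂gaussianReal 0 1 =
      -∫ x, (derivative p).eval x * f x ∂gaussianReal 0 1 := by
  have key := integral_eval_mul_deriv_gaussianReal p hf htf (htf.id_mul.add htg)
  have hxpf := (htf.id_mul.eval_mul p).integrable
  simp only [mul_add, eval_sub, eval_mul, eval_X, sub_mul] at key
  rw [integral_add hxpf (htg.eval_mul p).integrable,
    integral_sub (hxpf.congr (ae_of_all _ fun x => by ring)) (htf.eval_mul _).integrable] at key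
  simp only [mul_assoc, mul_left_comm (eval _ p)] at key
  linarith

theorem integral_deriv_deriv_deriv_eq_integral_hermite_three_mul {f g g' g'' : ℝ → ℝ}
    (hf : ∀ x, HasDerivAt f (x * f x + g x) x) (hg : ∀ x, HasDerivAt g (g' x) x)
    (hg' : ∀ x, HasDerivAt g' (g'' x) x) (htf : GaussianTame f) (htg : GaussianTame g)
    (htg' : GaussianTame g') (htg'' : GaussianTame g'') :
    ∫ x, deriv (deriv (deriv f)) x ∂gaussianReal 0 1 =
      ∫ x, aeval x (hermite 3) * f x ∂gaussianReal 0 1 := by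
  set f₁ := fun x => x * f x + g x
  set f₂ := fun x => x * f₁ x + (f x + g' x)
  set f₃ := fun x => x * f₂ x + (2 * f₁ x + g'' x)
  have hf₁ : ∀ x, HasDerivAt f₁ (f₂ x) x := fun x =>
    (((hasDerivAt_id x).mul (hf x)).add (hg x)).congr_deriv (by simp only [id, f₂, f₁]; ring)
  have hf₂ : ∀ x, HasDerivAt f₂ (f₃ x) x := fun x =>
    (((hasDerivAt_id x).mul (hf₁ x)).add ((hf x).add (hg' x))).congr_deriv
      (by simp only [id, f₃, f₂, f₁]; ring)
  have htf₁ : GaussianTame f₁ := htf.id_mul.add htg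
  have htf₂ : GaussianTame f₂ := htf₁.id_mul.add (htf.add htg')
  have htf₃ : GaussianTame f₃ := htf₂.id_mul.add ((htf₁.const_mul 2).add htg'')
  have hd : deriv f = f₁ := funext fun x => (hf x).deriv
  have hd₁ : deriv f₁ = f₂ := funext fun x => (hf₁ x).deriv
  have hd₂ : deriv f₂ = f₃ := funext fun x => (hf₂ x).deriv
  have h3 : deriv (deriv (deriv f)) = iteratedDeriv 3 f := by simp [iteratedDeriv_succ]
  rw [h3, integral_iteratedDeriv_gaussianReal_eq_integral_hermite_mul 3]
  · intro k hk
    interval_cases k <;> simp only [iteratedDeriv_succ, iteratedDeriv_zero, hd, hd₁]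
    exacts [fun x => (hf x).differentiableAt, fun x => (hf₁ x).differentiableAt,
      fun x => (hf₂ x).differentiableAt]
  · intro k hk
    interval_cases k <;> simp only [iteratedDeriv_succ, iteratedDeriv_zero, hd, hd₁, hd₂]
    exacts [htf, htf₁, htf₂, htf₃]

lemma hasDerivAt_setIntegral_Iic {w : ℝ → ℝ} (hw : Continuous w) (hwi : Integrable w) (x : ℝ) :
    HasDerivAt (fun t => ∫ y in Iic t, w y) (w x) x := by
  have heq : (fun t => ∫ y in Iic t, w y) =
      fun t => (∫ y in Iic 0, w y) + ∫ y in (0 : ℝ)..t, w y := by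
    funext t
    rw [← intervalIntegral.integral_Iic_sub_Iic hwi.integrableOn hwi.integrableOn]
    ring
  rw [heq]
  exact (intervalIntegral.integral_hasDerivAt_right
    hwi.intervalIntegrable (hw.stronglyMeasurableAtFilter _ _) hw.continuousAt).const_add _

lemma abs_setIntegral_le_of_sq_le {w : ℝ → ℝ} {b C x : ℝ} {s : Set ℝ} (hb : 0 < b)
    (hwi : Integrable w) (hbound : ∀ y, |w y| ≤ C * exp (-b * y ^ 2)) (hs : MeasurableSet s)
    (hsx : ∀ y ∈ s, x ^ 2 ≤ y ^ 2) :
    |∫ y in s, w y| ≤ C * (∫ y, exp (-(b / 2) * y ^ 2)) * exp (-(b / 2) * x ^ 2) := by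
  have hC : 0 ≤ C := by simpa using (abs_nonneg _).trans (hbound 0)
  have hE : Integrable fun y => exp (-(b / 2) * y ^ 2) := integrable_exp_neg_mul_sq (by linarith)
  have hpt : ∀ y ∈ s, |w y| ≤ C * exp (-(b / 2) * x ^ 2) * exp (-(b / 2) * y ^ 2) := by
    intro y hy
    have hxy : exp (-(b / 2) * y ^ 2) ≤ exp (-(b / 2) * x ^ 2) :=
      exp_le_exp.2 (by nlinarith [hsx y hy])
    calc |w y| ≤ C * (exp (-(b / 2) * y ^ 2) * exp (-(b / 2) * y ^ 2)) := by
          rw [← exp_add, show -(b / 2) * y ^ 2 + -(b / 2) * y ^ 2 = -b * y ^ 2 by ring]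
          exact hbound y
      _ ≤ C * (exp (-(b / 2) * x ^ 2) * exp (-(b / 2) * y ^ 2)) := by gcongr
      _ = C * exp (-(b / 2) * x ^ 2) * exp (-(b / 2) * y ^ 2) := by ring
  calc |∫ y in s, w y| ≤ ∫ y in s, |w y| := abs_integral_le_integral_abs
    _ ≤ ∫ y in s, C * exp (-(b / 2) * x ^ 2) * exp (-(b / 2) * y ^ 2) :=
        setIntegral_mono_on hwi.abs.integrableOn (hE.const_mul _).integrableOn hs hpt
    _ ≤ C * exp (-(b / 2) * x ^ 2) * ∫ y, exp (-(b / 2) * y ^ 2) := by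
        rw [integral_const_mul]
        exact mul_le_mul_of_nonneg_left
          (setIntegral_le_integral hE (ae_of_all _ fun y => (exp_pos _).le)) (by positivity)
    _ = C * (∫ y, exp (-(b / 2) * y ^ 2)) * exp (-(b / 2) * x ^ 2) := by ring

lemma abs_setIntegral_Iic_le_of_integral_eq_zero {w : ℝ → ℝ} {b C : ℝ} (hb : 0 < b)
    (hw : Continuous w) (hbound : ∀ y, |w y| ≤ C * exp (-b * y ^ 2)) (h0 : ∫ y, w y = 0)
    (x : ℝ) :
    |∫ y in Iic x, w y| ≤ C * (∫ y, exp (-(b / 2) * y ^ 2)) * exp (-(b / 2) * x ^ 2) := by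
  have hwi : Integrable w :=
    ((integrable_exp_neg_mul_sq hb).const_mul C).mono' hw.aestronglyMeasurable
      (ae_of_all _ fun y => (norm_eq_abs (w y)).symm ▸ hbound y)
  rcases le_or_gt x 0 with hx | hx
  · exact abs_setIntegral_le_of_sq_le hb hwi hbound measurableSet_Iic
      fun y hy => by nlinarith [mem_Iic.1 hy]
  · have hsplit := intervalIntegral.integral_Iic_add_Ioi (b := x) hwi.integrableOn hwi.integrableOn
    rw [h0, add_eq_zero_iff_eq_neg] at hsplit
    rw [hsplit, abs_neg]
    exact abs_setIntegral_le_of_sq_le hb hwi hbound measurableSet_Ioi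
      fun y hy => by nlinarith [mem_Ioi.1 hy]

lemma mul_exp_neg_sq_half_eq (u : ℝ → ℝ) (y : ℝ) :
    u y * exp (-y ^ 2 / 2) = √(2 * π) * (gaussianPDFReal 0 1 y * u y) := by
  simp only [gaussianPDFReal, NNReal.coe_one, mul_one, sub_zero]
  field_simp

namespace GaussianTame

variable {h : ℝ → ℝ}

lemma integrable_mul_exp_neg_sq_half (hh : GaussianTame h) :
    Integrable fun y => h y * exp (-y ^ 2 / 2) := by
  simpa only [mul_exp_neg_sq_half_eq] using hh.integrable_mul_gaussianPDFReal.const_mul _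

lemma integral_sub_gaussMean_mul_exp_eq_zero (hh : GaussianTame h) :
    ∫ y, (h y - gaussMean h) * exp (-y ^ 2 / 2) = 0 := by
  simp only [mul_exp_neg_sq_half_eq fun y => h y - gaussMean h, integral_const_mul,
    ← smul_eq_mul (gaussianPDFReal 0 1 _), ← integral_gaussianReal_eq_integral_smul one_ne_zero]
  rw [integral_sub hh.integrable (integrable_const _)]
  simp [gaussMean]

end GaussianTame

lemma hasDerivAt_steinSol {h : ℝ → ℝ} (hh : GaussianTame h) (x : ℝ) :
    HasDerivAt (steinSol h) (x * steinSol h x + (h x - gaussMean h)) x := by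
  have hg := hh.sub (GaussianTame.const (gaussMean h))
  have hG := hasDerivAt_setIntegral_Iic (w := fun y => (h y - gaussMean h) * exp (-y ^ 2 / 2))
    (hg.1.mul (by fun_prop)) hg.integrable_mul_exp_neg_sq_half x
  have hE : HasDerivAt (fun y => exp (y ^ 2 / 2)) (x * exp (x ^ 2 / 2)) x :=
    (((hasDerivAt_id' x).fun_pow 2).div_const 2).exp.congr_deriv (by push_cast; ring)
  have hcancel : exp (x ^ 2 / 2) * exp (-x ^ 2 / 2) = 1 := by
    rw [← exp_add, show x ^ 2 / 2 + -x ^ 2 / 2 = 0 by ring, exp_zero]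
  refine (hE.mul hG).congr_deriv ?_
  rw [steinSol]
  linear_combination (h x - gaussMean h) * hcancel

lemma GaussianTame.steinSol {h : ℝ → ℝ} (hh : GaussianTame h) : GaussianTame (steinSol h) := by
  refine ⟨continuous_iff_continuousAt.2 fun x => (hasDerivAt_steinSol hh x).continuousAt, ?_⟩
  obtain ⟨hg, a, C, ha₀, ha, hC⟩ := hh.sub (GaussianTame.const (gaussMean h))
  have hw : ∀ y, |(h y - gaussMean h) * exp (-y ^ 2 / 2)| ≤ C * exp (-(1 / 2 - a) * y ^ 2) := by
    intro y
    rw [abs_mul, abs_exp, show -(1 / 2 - a) * y ^ 2 = a * y ^ 2 + -y ^ 2 / 2 by ring, exp_add,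
      ← mul_assoc]
    exact mul_le_mul_of_nonneg_right (hC y) (exp_pos _).le
  set K := C * ∫ y, exp (-((1 / 2 - a) / 2) * y ^ 2)
  refine ⟨1 / 4 + a / 2, K, by positivity, by linarith, fun x => ?_⟩
  have hG := abs_setIntegral_Iic_le_of_integral_eq_zero (by linarith)
    (w := fun y => (h y - gaussMean h) * exp (-y ^ 2 / 2)) (hg.mul (by fun_prop)) hw
    hh.integral_sub_gaussMean_mul_exp_eq_zero x
  rw [_root_.steinSol, abs_mul, abs_exp]
  calc exp (x ^ 2 / 2) * |∫ y in Iic x, (h y - gaussMean h) * exp (-y ^ 2 / 2)|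
      ≤ exp (x ^ 2 / 2) * (K * exp (-((1 / 2 - a) / 2) * x ^ 2)) := by gcongr
    _ = K * exp ((1 / 4 + a / 2) * x ^ 2) := by rw [mul_left_comm, ← exp_add]; ring_nf

/-- For `h` C² with `‖h''‖_∞ ≤ 1`, `E[f_h'''(N)] = -(1/4) E[h(N) H₄(N)]` where
`H₄(x) = x⁴ - 6x² + 3`. -/
theorem stein_third_deriv_mean (h : ℝ → ℝ) (hsmooth : ContDiff ℝ 2 h)
    (hbound : ∀ x, |deriv (deriv h) x| ≤ 1) :
    ∫ x, deriv (deriv (deriv (steinSol h))) x ∂(gaussianReal 0 1) =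
      -(1 / 4) * ∫ x, h x * (x ^ 4 - 6 * x ^ 2 + 3) ∂(gaussianReal 0 1) := by
  obtain ⟨hd₀, -, hc₁⟩ := contDiff_succ_iff_deriv.1 (show ContDiff ℝ (1 + 1) h from hsmooth)
  obtain ⟨hd₁, hc₂⟩ := contDiff_one_iff_deriv.1 hc₁
  have ht₂ : GaussianTame (deriv (deriv h)) := .of_abs_le hc₂ hbound
  have ht₁ := ht₂.of_hasDerivAt fun x => (hd₁ x).hasDerivAt
  have ht₀ := ht₁.of_hasDerivAt fun x => (hd₀ x).hasDerivAt
  have htg := ht₀.sub (.const (gaussMean h))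
  have hadj := integral_eval_mul_eq_neg_integral_derivative_mul
    ((hermite 4).map (algebraMap ℤ ℝ)) (hasDerivAt_steinSol ht₀) ht₀.steinSol htg
  simp only [derivative_map, derivative_hermite_four, Polynomial.map_mul, eval_mul,
    eval_map_algebraMap, map_ofNat, mul_assoc, integral_const_mul] at hadj
  rw [integral_deriv_deriv_deriv_eq_integral_hermite_three_mul (hasDerivAt_steinSol ht₀)
    (fun x => (hd₀ x).hasDerivAt.sub_const _) (fun x => (hd₁ x).hasDerivAt) ht₀.steinSol htg
    ht₁ ht₂]
  rw [integral_aeval_hermite_mul_sub_const (by norm_num) ht₀] at hadj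
  simp only [aeval_hermite_four, mul_comm _ (h _)] at hadj
  linarith
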